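/- arXiv:1506.04885 — 4 statements merged into one kernel-verified Lean document; each statement's English description precedes it below -/
import Mathlib

section
/- If A is a strictly positive N×N real matrix, u is a strictly positive vector, ρ a real number with A·u ≤ ρ·u componentwise and A·u ≠ ρ·u, then the spectral radius of A is strictly less than ρ. -/
/-!
Put `v := A u`. Since `A` is strictly positive and `A u ≤ ρ u` with `A u ≠ ρ u`, applying `A` once
more makes every inequality strict: `A v < ρ v`, so `A v ≤ c v` for some `c < ρ`. For a complex
eigenpair `A x = μ x`, the triangle inequality gives `‖μ‖ |x| ≤ A |x|`, and comparing `|x|` with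
the smallest multiple `t v` dominating it, at a coordinate where the two agree, yields `‖μ‖ ≤ c`.
-/

open Matrix

/-- Spectral radius of a real square matrix: the maximum modulus of its complex eigenvalues. -/
noncomputable def specRad {N : ℕ} (A : Matrix (Fin N) (Fin N) ℝ) : ℝ :=
  sSup ((fun z : ℂ => ‖z‖) '' spectrum ℂ (A.map (Complex.ofReal)))

/-- The IRU-set (independent row uncertainty set) determined by row sets `rows i ⊆ ℝ^M`:
all `N × M` matrices whose `i`-th row belongs to `rows i`. -/
def IRU {N M : ℕ} (rows : Fin N → Set (Fin M → ℝ)) : Set (Matrix (Fin N) (Fin M) ℝ) :=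
  {A | ∀ i, A i ∈ rows i}

open Filter Topology

namespace Matrix

variable {n : Type*} [Fintype n]

theorem mulVec_le_mulVec_of_nonneg {A : Matrix n n ℝ} (hA : ∀ i j, 0 ≤ A i j) {w z : n → ℝ}
    (hwz : w ≤ z) (i : n) : (A *ᵥ w) i ≤ (A *ᵥ z) i :=
  Finset.sum_le_sum fun j _ => mul_le_mul_of_nonneg_left (hwz j) (hA i j)

theorem mulVec_lt_mulVec_of_pos {A : Matrix n n ℝ} (hA : ∀ i j, 0 < A i j) {w z : n → ℝ}
    (hwz : w < z) (i : n) : (A *ᵥ w) i < (A *ᵥ z) i := by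
  obtain ⟨hle, k, hk⟩ := Pi.lt_def.1 hwz
  exact Finset.sum_lt_sum (fun j _ => mul_le_mul_of_nonneg_left (hle j) (hA i j).le)
    ⟨k, Finset.mem_univ k, mul_lt_mul_of_pos_left hk (hA i k)⟩

theorem mulVec_pos [Nonempty n] {A : Matrix n n ℝ} (hA : ∀ i j, 0 < A i j) {u : n → ℝ}
    (hu : ∀ i, 0 < u i) (i : n) : 0 < (A *ᵥ u) i :=
  Finset.sum_pos (fun j _ => mul_pos (hA i j) (hu j)) Finset.univ_nonempty

theorem le_of_mul_le_mulVec_of_mulVec_le_mul {A : Matrix n n ℝ} (hA : ∀ i j, 0 ≤ A i j)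
    {v w : n → ℝ} (hv : ∀ i, 0 < v i) (hw : 0 < w) {r c : ℝ}
    (hr : ∀ i, r * w i ≤ (A *ᵥ w) i) (hc : ∀ i, (A *ᵥ v) i ≤ c * v i) : r ≤ c := by
  obtain ⟨-, k, hk⟩ := Pi.lt_def.1 hw
  obtain ⟨i, -, hi⟩ := Finset.exists_max_image Finset.univ (fun j => w j / v j) ⟨k, by simp⟩
  set t := w i / v i
  have hwt : w ≤ t • v := fun j => (div_le_iff₀ (hv j)).1 (hi j (Finset.mem_univ j))
  have ht : 0 < t := (div_pos hk (hv k)).trans_le (hi k (Finset.mem_univ k))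
  have hwi : w i = t * v i := (div_mul_cancel₀ _ (hv i).ne').symm
  have key : r * w i ≤ c * w i := calc
    r * w i ≤ (A *ᵥ w) i := hr i
    _ ≤ (A *ᵥ (t • v)) i := mulVec_le_mulVec_of_nonneg hA hwt i
    _ = t * (A *ᵥ v) i := by rw [mulVec_smul]; rfl
    _ ≤ t * (c * v i) := mul_le_mul_of_nonneg_left (hc i) ht.le
    _ = c * w i := by rw [hwi]; ring
  exact le_of_mul_le_mul_right key (hwi ▸ mul_pos ht (hv i))

theorem norm_mul_le_mulVec_norm {A : Matrix n n ℝ} (hA : ∀ i j, 0 ≤ A i j) {x : n → ℂ} {μ : ℂ}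
    (hx : A.map Complex.ofReal *ᵥ x = μ • x) (i : n) :
    ‖μ‖ * ‖x i‖ ≤ (A *ᵥ fun j => ‖x j‖) i := calc
  ‖μ‖ * ‖x i‖ = ‖∑ j, (A i j : ℂ) * x j‖ := by
    rw [← norm_mul, ← smul_eq_mul, ← Pi.smul_apply, ← hx]; rfl
  _ ≤ ∑ j, ‖(A i j : ℂ) * x j‖ := norm_sum_le _ _
  _ = (A *ᵥ fun j => ‖x j‖) i := by
    simp [mulVec, dotProduct, abs_of_nonneg (hA i _)]

theorem norm_le_of_mem_spectrum_of_mulVec_le [DecidableEq n] {A : Matrix n n ℝ}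
    (hA : ∀ i j, 0 ≤ A i j) {v : n → ℝ} (hv : ∀ i, 0 < v i) {c : ℝ}
    (hc : ∀ i, (A *ᵥ v) i ≤ c * v i) {μ : ℂ} (hμ : μ ∈ spectrum ℂ (A.map Complex.ofReal)) :
    ‖μ‖ ≤ c := by
  rw [← spectrum_toLin', ← Module.End.hasEigenvalue_iff_mem_spectrum] at hμ
  obtain ⟨x, hx, hx0⟩ := hμ.exists_hasEigenvector
  refine le_of_mul_le_mulVec_of_mulVec_le_mul (w := fun j => ‖x j‖) hA hv ?_
    (norm_mul_le_mulVec_norm hA ?_) hc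
  · obtain ⟨k, hk⟩ := Function.ne_iff.1 hx0
    exact Pi.lt_def.2 ⟨fun j => norm_nonneg _, k, norm_pos_iff.2 hk⟩
  · simpa using Module.End.mem_eigenspace_iff.1 hx

end Matrix

theorem exists_lt_forall_le_mul {ι : Type*} [Finite ι] {w v : ι → ℝ} {ρ : ℝ}
    (h : ∀ i, w i < ρ * v i) : ∃ c < ρ, ∀ i, w i ≤ c * v i := by
  have hnear : ∀ᶠ c in 𝓝[<] ρ, ∀ i, w i < c * v i :=
    eventually_all.2 fun i => nhdsWithin_le_nhds <|
      (continuous_mul_const (v i)).tendsto ρ |>.eventually (lt_mem_nhds (h i))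
  obtain ⟨c, hc, hcρ⟩ := (hnear.and self_mem_nhdsWithin).exists
  exact ⟨c, hcρ, fun i => (hc i).le⟩

theorem specRad_le_of_mulVec_le {N : ℕ} {A : Matrix (Fin N) (Fin N) ℝ} (hA : ∀ i j, 0 ≤ A i j)
    {v : Fin N → ℝ} (hv : ∀ i, 0 < v i) {c : ℝ} (hc0 : 0 ≤ c)
    (hc : ∀ i, (A *ᵥ v) i ≤ c * v i) : specRad A ≤ c :=
  Real.sSup_le (by rintro _ ⟨μ, hμ, rfl⟩; exact norm_le_of_mem_spectrum_of_mulVec_le hA hv hc hμ)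
    hc0

theorem stmt1 {N : ℕ} (A : Matrix (Fin N) (Fin N) ℝ) (u : Fin N → ℝ) (ρ : ℝ)
    (hA : ∀ i j, 0 < A i j) (hu : ∀ i, 0 < u i)
    (h : ∀ i, A.mulVec u i ≤ ρ * u i) (hne : A.mulVec u ≠ fun i => ρ * u i) :
    specRad A < ρ := by
  have hlt : A *ᵥ u < ρ • u := lt_of_le_of_ne h hne
  obtain ⟨k, -⟩ := (Pi.lt_def.1 hlt).2
  have : Nonempty (Fin N) := ⟨k⟩
  set v := A *ᵥ u
  have hv : ∀ i, 0 < v i := mulVec_pos hA hu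
  have hAv : ∀ i, (A *ᵥ v) i < ρ * v i := fun i => by
    simpa [mulVec_smul] using mulVec_lt_mulVec_of_pos hA hlt i
  obtain ⟨c, hcρ, hc⟩ := exists_lt_forall_le_mul hAv
  have hc0 : 0 ≤ c :=
    nonneg_of_mul_nonneg_left ((mulVec_pos hA hv k).le.trans (hc k)) (hv k)
  exact (specRad_le_of_mulVec_le (fun i j => (hA i j).le) hv hc0 hc).trans_lt hcρ
end

section
/- If A is a strictly positive N×N real matrix, u a nonzero nonnegative vector, ρ ≥ 0 with A·u ≥ ρ·u componentwise and A·u ≠ ρ·u, then the spectral radius of A is strictly greater than ρ. -/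
open Matrix

/-!
Put `v = A u` and `w = A u - ρ u`, so that `w ≥ 0`, `w ≠ 0` and `A v = ρ v + A w`. Since `A` is
strictly positive, `A w` is strictly positive in every coordinate, which leaves room for a
`δ > 0` with `A v ≥ (ρ + δ) v`. Iterating, `A ^ k v ≥ (ρ + δ) ^ k v` for the nonnegative,
nonzero `v`, hence `‖A ^ k‖ ≥ (ρ + δ) ^ k` in the `ℓ∞` operator norm, and Gelfand's formula
gives a spectral radius of at least `ρ + δ`.
-/

open Filter Topology

lemma exists_pos_smul_le_of_forall_pos {ι : Type*} [Finite ι] (x y : ι → ℝ)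
    (hy : ∀ i, 0 < y i) : ∃ δ > (0 : ℝ), δ • x ≤ y := by
  have hsmall : ∀ᶠ δ in 𝓝[>] (0 : ℝ), ∀ i, δ * x i ≤ y i :=
    eventually_all.2 fun i => nhdsWithin_le_nhds <|
      ((continuous_id.mul continuous_const).tendsto' 0 0 (zero_mul _)).eventually
        (eventually_le_nhds (hy i))
  obtain ⟨δ, hδ, hδpos⟩ := (hsmall.and self_mem_nhdsWithin).exists
  exact ⟨δ, hδpos, hδ⟩

namespace Matrix

variable {n : Type*} [Fintype n]

lemma mulVec_mono_of_nonneg {A : Matrix n n ℝ} (hA : ∀ i j, 0 ≤ A i j) {x y : n → ℝ}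
    (hxy : x ≤ y) : A *ᵥ x ≤ A *ᵥ y :=
  fun i => dotProduct_le_dotProduct_of_nonneg_left hxy (hA i)

lemma mulVec_pos_of_pos {A : Matrix n n ℝ} (hA : ∀ i j, 0 < A i j) {x : n → ℝ} (hx : 0 ≤ x)
    (hx0 : x ≠ 0) (i : n) : 0 < (A *ᵥ x) i := by
  obtain ⟨j, hj⟩ := Function.ne_iff.mp hx0
  exact Finset.sum_pos' (fun k _ => mul_nonneg (hA i k).le (hx k))
    ⟨j, Finset.mem_univ j, mul_pos (hA i j) ((hx j).lt_of_ne' hj)⟩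

lemma pow_smul_le_pow_mulVec {A : Matrix n n ℝ} [DecidableEq n] (hA : ∀ i j, 0 ≤ A i j)
    {r : ℝ} (hr : 0 ≤ r) {v : n → ℝ} (h : r • v ≤ A *ᵥ v) (k : ℕ) :
    r ^ k • v ≤ (A ^ k) *ᵥ v := by
  induction k with
  | zero => simp
  | succ k ih =>
    calc r ^ (k + 1) • v = r ^ k • (r • v) := by rw [pow_succ, mul_smul]
      _ ≤ r ^ k • (A *ᵥ v) := smul_le_smul_of_nonneg_left h (pow_nonneg hr k)
      _ = A *ᵥ (r ^ k • v) := (mulVec_smul A _ v).symm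
      _ ≤ A *ᵥ ((A ^ k) *ᵥ v) := mulVec_mono_of_nonneg hA ih
      _ = (A ^ (k + 1)) *ᵥ v := by rw [mulVec_mulVec, pow_succ']

end Matrix

lemma ofReal_le_spectralRadius_of_pow_le_norm_pow {A : Type*} [NormedRing A] [NormedAlgebra ℂ A]
    [CompleteSpace A] (a : A) {r : ℝ} (hr : 0 ≤ r) (h : ∀ k : ℕ, r ^ k ≤ ‖a ^ k‖) :
    ENNReal.ofReal r ≤ spectralRadius ℂ a := by
  refine ge_of_tendsto (spectrum.pow_norm_pow_one_div_tendsto_nhds_spectralRadius a) ?_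
  filter_upwards [eventually_ne_atTop 0] with k hk
  refine ENNReal.ofReal_le_ofReal ?_
  calc r = (r ^ k) ^ (1 / k : ℝ) := by rw [one_div, Real.pow_rpow_inv_natCast hr hk]
    _ ≤ ‖a ^ k‖ ^ (1 / k : ℝ) := Real.rpow_le_rpow (by positivity) (h k) (by positivity)

lemma specRad_nonneg {N : ℕ} (A : Matrix (Fin N) (Fin N) ℝ) : 0 ≤ specRad A :=
  Real.sSup_nonneg (by rintro _ ⟨z, -, rfl⟩; exact norm_nonneg z)

section LinftyOpNorm

attribute [local instance] Matrix.linftyOpNormedAddCommGroup Matrix.linftyOpNormedRing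
  Matrix.linftyOpNormedAlgebra

lemma Matrix.le_linfty_opNorm_of_smul_le_mulVec {m : Type*} [Fintype m]
    {B : Matrix m m ℝ} {c : ℝ} (hc : 0 ≤ c) {v : m → ℝ} (hv : 0 ≤ v) (hv0 : v ≠ 0)
    (h : c • v ≤ B *ᵥ v) : c ≤ ‖B‖ := by
  have hcv : ‖c • v‖ ≤ ‖B *ᵥ v‖ :=
    (pi_norm_le_iff_of_nonneg (norm_nonneg _)).2 fun i =>
      calc ‖(c • v) i‖ = (c • v) i := Real.norm_of_nonneg (smul_nonneg hc hv i)
        _ ≤ (B *ᵥ v) i := h i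
        _ ≤ ‖B *ᵥ v‖ := (Real.le_norm_self _).trans (norm_le_pi_norm _ i)
  rw [norm_smul_of_nonneg hc] at hcv
  exact le_of_mul_le_mul_right (hcv.trans (linfty_opNorm_mulVec B v)) (norm_pos_iff.2 hv0)

lemma Matrix.linfty_opNorm_map_ofReal {m : Type*} [Fintype m] (A : Matrix m m ℝ) :
    ‖A.map Complex.ofReal‖ = ‖A‖ := by
  simp [linfty_opNorm_def]

lemma spectralRadius_map_ofReal_le_specRad {N : ℕ} (A : Matrix (Fin N) (Fin N) ℝ) :
    spectralRadius ℂ (A.map Complex.ofReal) ≤ ENNReal.ofReal (specRad A) := by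
  have hbdd : BddAbove ((fun z : ℂ => ‖z‖) '' spectrum ℂ (A.map Complex.ofReal)) :=
    ((spectrum.isCompact _).image continuous_norm).bddAbove
  refine iSup₂_le fun z hz => ?_
  exact (ofReal_norm z).symm.trans_le (ENNReal.ofReal_le_ofReal (le_csSup hbdd ⟨z, hz, rfl⟩))

lemma le_specRad_of_smul_le_mulVec {N : ℕ} {A : Matrix (Fin N) (Fin N) ℝ}
    (hA : ∀ i j, 0 ≤ A i j) {v : Fin N → ℝ} (hv : 0 ≤ v) (hv0 : v ≠ 0) {r : ℝ}
    (h : r • v ≤ A *ᵥ v) : r ≤ specRad A := by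
  rcases lt_or_ge r 0 with hr | hr
  · exact hr.le.trans (specRad_nonneg A)
  have hpow (k : ℕ) : r ^ k ≤ ‖A.map Complex.ofReal ^ k‖ := by
    rw [show A.map Complex.ofReal ^ k = (A ^ k).map Complex.ofReal from
      (A.map_pow Complex.ofRealHom k).symm, linfty_opNorm_map_ofReal]
    exact le_linfty_opNorm_of_smul_le_mulVec (pow_nonneg hr k) hv hv0
      (pow_smul_le_pow_mulVec hA hr h k)
  refine (ENNReal.ofReal_le_ofReal_iff (specRad_nonneg A)).1 ?_
  exact (ofReal_le_spectralRadius_of_pow_le_norm_pow _ hr hpow).trans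
    (spectralRadius_map_ofReal_le_specRad A)

end LinftyOpNorm

theorem stmt3_general {N : ℕ} (A : Matrix (Fin N) (Fin N) ℝ) (u : Fin N → ℝ) (ρ : ℝ)
    (hA : ∀ i j, 0 < A i j) (hu : ∀ i, 0 ≤ u i) (hune : u ≠ 0)
    (h : ∀ i, ρ * u i ≤ A.mulVec u i) (hne : A.mulVec u ≠ fun i => ρ * u i) :
    ρ < specRad A := by
  set v := A *ᵥ u
  set w := v - ρ • u
  have hw : 0 ≤ w := sub_nonneg.2 h
  have hw0 : w ≠ 0 := sub_ne_zero.2 hne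
  obtain ⟨δ, hδ, hδv⟩ :=
    exists_pos_smul_le_of_forall_pos v (A *ᵥ w) (mulVec_pos_of_pos hA hw hw0)
  have hAv : A *ᵥ v = ρ • v + A *ᵥ w := by
    rw [← mulVec_smul, ← mulVec_add, add_sub_cancel]
  have hv : 0 ≤ v := fun i => (mulVec_pos_of_pos hA hu hune i).le
  have hv0 : v ≠ 0 := by
    obtain ⟨i, -⟩ := Function.ne_iff.mp hune
    exact Function.ne_iff.mpr ⟨i, (mulVec_pos_of_pos hA hu hune i).ne'⟩
  have hρδ : (ρ + δ) • v ≤ A *ᵥ v := by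
    rw [add_smul, hAv]
    exact add_le_add_right hδv _
  exact (lt_add_of_pos_right ρ hδ).trans_le
    (le_specRad_of_smul_le_mulVec (fun i j => (hA i j).le) hv hv0 hρδ)

theorem stmt3 {N : ℕ} (A : Matrix (Fin N) (Fin N) ℝ) (u : Fin N → ℝ) (ρ : ℝ)
    (hA : ∀ i j, 0 < A i j) (hu : ∀ i, 0 ≤ u i) (hune : u ≠ 0) (hρ : 0 ≤ ρ)
    (h : ∀ i, ρ * u i ≤ A.mulVec u i) (hne : A.mulVec u ≠ fun i => ρ * u i) :
    ρ < specRad A :=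
  stmt3_general A u ρ hA hu hune h hne
end

section
/- Hourglass alternative, part (i): Let 𝒜 be an IRU-set of N×M real matrices containing a matrix Ã with Ã·u = v for vectors u ∈ ℝ^M, v ∈ ℝ^N. Then either A·u ≥ v componentwise for all A ∈ 𝒜, or there exists Ā ∈ 𝒜 with Ā·u ≤ v componentwise and Ā·u ≠ v. -/
/-! If some `A ∈ 𝒜` has `(A u)ᵢ < vᵢ`, replace the `i`-th row of `Ã` by that of `A`: by row
independence the result stays in `𝒜`, and its product with `u` is `v` with entry `i` lowered. -/

open Matrix

theorem Matrix.mulVec_updateRow {m n α : Type*} [Fintype n] [DecidableEq m]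
    [NonUnitalNonAssocSemiring α] (A : Matrix m n α) (i : m) (b : n → α) (u : n → α) :
    A.updateRow i b *ᵥ u = Function.update (A *ᵥ u) i (b ⬝ᵥ u) := by
  funext j
  rcases eq_or_ne j i with rfl | hj
  · simp only [mulVec, updateRow_self, Function.update_self]
  · simp only [mulVec, updateRow_ne hj, Function.update_of_ne hj]

theorem updateRow_mem_IRU {N M : ℕ} {rows : Fin N → Set (Fin M → ℝ)}
    {A : Matrix (Fin N) (Fin M) ℝ} (hA : A ∈ IRU rows) {i : Fin N} {b : Fin M → ℝ}
    (hb : b ∈ rows i) : A.updateRow i b ∈ IRU rows := by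
  intro j
  rcases eq_or_ne j i with rfl | hj
  · simpa only [updateRow_self] using hb
  · simpa only [updateRow_ne hj] using hA j

theorem stmt4 {N M : ℕ} (rows : Fin N → Set (Fin M → ℝ))
    (Atil : Matrix (Fin N) (Fin M) ℝ) (hAtil : Atil ∈ IRU rows)
    (u : Fin M → ℝ) (v : Fin N → ℝ) (hv : Atil.mulVec u = v) :
    (∀ A ∈ IRU rows, ∀ i, v i ≤ A.mulVec u i) ∨
      (∃ Abar ∈ IRU rows, (∀ i, Abar.mulVec u i ≤ v i) ∧ Abar.mulVec u ≠ v) := by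
  refine or_iff_not_imp_left.mpr fun h => ?_
  push Not at h
  obtain ⟨A, hA, i, hi⟩ := h
  have hAbar : Atil.updateRow i (A i) *ᵥ u = Function.update v i ((A *ᵥ u) i) := by
    rw [mulVec_updateRow, hv]
    rfl
  refine ⟨Atil.updateRow i (A i), updateRow_mem_IRU hAtil (hA i), fun j => ?_, ?_⟩
  · rw [hAbar]
    exact update_le_self_iff.mpr hi.le j
  · rw [hAbar, Ne, Function.update_eq_self_iff]
    exact hi.ne
end

section
/- If A and B are nonnegative square matrices of the same size with A ≤ B entrywise, then the spectral radius of A is at most the spectral radius of B. -/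
open Matrix

/-!
By Gelfand's formula `ρ(M) = lim ‖M ^ k‖ ^ (1 / k)` for any Banach algebra norm; take the
`ℓ∞` operator norm (maximal absolute row sum). Entrywise `0 ≤ A ≤ B` propagates to
`0 ≤ A ^ k ≤ B ^ k`, and this norm is monotone in the absolute values of the entries, so
`‖A ^ k‖ ≤ ‖B ^ k‖` for every `k` and the limits compare.
-/

open scoped ENNReal

namespace Matrix

lemma pow_apply_le_pow_apply {n α : Type*} [Fintype n] [DecidableEq n] [Semiring α]
    [PartialOrder α] [IsOrderedRing α] {A B : Matrix n n α} (hA : ∀ i j, 0 ≤ A i j)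
    (hAB : ∀ i j, A i j ≤ B i j) (k : ℕ) : ∀ i j, (A ^ k) i j ≤ (B ^ k) i j := by
  induction k with
  | zero => exact fun _ _ => le_rfl
  | succ k ih =>
    intro i j
    rw [pow_succ, pow_succ, mul_apply, mul_apply]
    exact Finset.sum_le_sum fun l _ =>
      mul_le_mul (ih i l) (hAB l j) (hA l j) ((pow_apply_nonneg hA k i l).trans (ih i l))

section LinftyOpNorm

attribute [local instance] Matrix.linftyOpSeminormedAddCommGroup

lemma linfty_opNNNorm_le_of_nnnorm_apply_le {m n α : Type*} [Fintype m] [Fintype n]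
    [SeminormedAddCommGroup α] {A B : Matrix m n α} (h : ∀ i j, ‖A i j‖₊ ≤ ‖B i j‖₊) :
    ‖A‖₊ ≤ ‖B‖₊ := by
  simp only [linfty_opNNNorm_def]
  exact Finset.sup_mono_fun fun i _ => Finset.sum_le_sum fun j _ => h i j

end LinftyOpNorm

end Matrix

namespace spectrum

lemma spectralRadius_eq_ofReal_sSup_norm {𝕜 A : Type*} [NontriviallyNormedField 𝕜]
    [ProperSpace 𝕜] [NormedRing A] [NormedAlgebra 𝕜 A] [CompleteSpace A] (a : A) :
    spectralRadius 𝕜 a = ENNReal.ofReal (sSup ((‖·‖) '' spectrum 𝕜 a)) := by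
  rcases (spectrum 𝕜 a).eq_empty_or_nonempty with h | h
  · simp [spectralRadius, h]
  obtain ⟨k, hk, hρ⟩ := exists_nnnorm_eq_spectralRadius_of_nonempty h
  have hk_max : IsGreatest ((‖·‖) '' spectrum 𝕜 a) ‖k‖ := by
    refine ⟨⟨k, hk, rfl⟩, ?_⟩
    rintro _ ⟨z, hz, rfl⟩
    have : (‖z‖₊ : ℝ≥0∞) ≤ ‖k‖₊ := hρ ▸ le_iSup₂ (α := ℝ≥0∞) z hz
    exact_mod_cast this
  rw [hk_max.csSup_eq, ← hρ, ofReal_norm, enorm_eq_nnnorm]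

lemma spectralRadius_le_of_forall_nnnorm_pow_le {A : Type*} [NormedRing A] [NormedAlgebra ℂ A]
    [CompleteSpace A] {a b : A} (h : ∀ n : ℕ, ‖a ^ n‖₊ ≤ ‖b ^ n‖₊) :
    spectralRadius ℂ a ≤ spectralRadius ℂ b :=
  le_of_tendsto_of_tendsto' (pow_nnnorm_pow_one_div_tendsto_nhds_spectralRadius a)
    (pow_nnnorm_pow_one_div_tendsto_nhds_spectralRadius b) fun n =>
      ENNReal.rpow_le_rpow (ENNReal.coe_le_coe.mpr (h n)) (by positivity)

end spectrum

section NonnegMatrix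

attribute [local instance] Matrix.linftyOpNormedRing Matrix.linftyOpNormedAlgebra

lemma spectralRadius_map_ofReal_le {n : Type*} [Fintype n] [DecidableEq n]
    {A B : Matrix n n ℝ} (hA : ∀ i j, 0 ≤ A i j) (hAB : ∀ i j, A i j ≤ B i j) :
    spectralRadius ℂ (A.map Complex.ofReal) ≤ spectralRadius ℂ (B.map Complex.ofReal) := by
  have : CompleteSpace (Matrix n n ℂ) := FiniteDimensional.complete ℂ _
  refine spectrum.spectralRadius_le_of_forall_nnnorm_pow_le fun k => ?_
  have map_ofReal_pow (M : Matrix n n ℝ) : M.map Complex.ofReal ^ k = (M ^ k).map Complex.ofReal :=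
    (map_pow Complex.ofRealHom.mapMatrix M k).symm
  rw [map_ofReal_pow, map_ofReal_pow]
  refine linfty_opNNNorm_le_of_nnnorm_apply_le fun i j => ?_
  rw [map_apply, map_apply, Complex.nnnorm_real, Complex.nnnorm_real, ← NNReal.coe_le_coe,
    coe_nnnorm, coe_nnnorm]
  exact abs_le_abs_of_nonneg (pow_apply_nonneg hA k i j) (pow_apply_le_pow_apply hA hAB k i j)

lemma spectralRadius_map_ofReal_eq_ofReal_specRad {N : ℕ} (A : Matrix (Fin N) (Fin N) ℝ) :
    spectralRadius ℂ (A.map Complex.ofReal) = ENNReal.ofReal (specRad A) := by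
  have : CompleteSpace (Matrix (Fin N) (Fin N) ℂ) := FiniteDimensional.complete ℂ _
  exact spectrum.spectralRadius_eq_ofReal_sSup_norm _

end NonnegMatrix

theorem stmt19 {N : ℕ} (A B : Matrix (Fin N) (Fin N) ℝ)
    (hA : ∀ i j, 0 ≤ A i j) (hAB : ∀ i j, A i j ≤ B i j) :
    specRad A ≤ specRad B := by
  have hB : 0 ≤ specRad B := Real.sSup_nonneg fun _ ⟨z, _, hz⟩ => hz ▸ norm_nonneg z
  have h := spectralRadius_map_ofReal_le hA hAB
  rwa [spectralRadius_map_ofReal_eq_ofReal_specRad, spectralRadius_map_ofReal_eq_ofReal_specRad,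
    ENNReal.ofReal_le_ofReal_iff hB] at h
end
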